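/- With X_b(m) and X_c(m) defined by the recursions X_b(m) = [[X_b(m-1), X_b(m-1)], [X_b(m-1), 0]], X_c(m) = [[X_c(m-1), X_c(m-1)], [X_c(m-1), -X_c(m-1)]], X_b(0) = X_c(0) = (1), the matrix A_m := X_b(m)⁻¹ · X_c(m) satisfies A_0 = (1) and A_m = [[A_{m-1}, -A_{m-1}], [0, 2·A_{m-1}]] for all m ≥ 1. -/

import Mathlib

open Matrix Finset

def blockEquiv (m : ℕ) : Fin (2 ^ m) ⊕ Fin (2 ^ m) ≃ Fin (2 ^ (m + 1)) :=
  finSumFinEquiv.trans (finCongr (by rw [pow_succ, mul_two]))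

def Xb : (m : ℕ) → Matrix (Fin (2 ^ m)) (Fin (2 ^ m)) ℚ
  | 0 => 1
  | m + 1 =>
      Matrix.reindex (blockEquiv m) (blockEquiv m)
        (Matrix.fromBlocks (Xb m) (Xb m) (Xb m) 0)

def Xc : (m : ℕ) → Matrix (Fin (2 ^ m)) (Fin (2 ^ m)) ℚ
  | 0 => 1
  | m + 1 =>
      Matrix.reindex (blockEquiv m) (blockEquiv m)
        (Matrix.fromBlocks (Xc m) (Xc m) (Xc m) (-(Xc m)))

/-- The association matrix linking baseline and centered least-squares estimators. -/
noncomputable def assoc (m : ℕ) : Matrix (Fin (2 ^ m)) (Fin (2 ^ m)) ℚ := (Xb m)⁻¹ * Xc m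

/-!
Since `X_b(m)` is invertible, `A_m` is the unique solution of `X_b(m) A = X_c(m)`, so it suffices
to check that the proposed block matrix solves this equation at level `m + 1`; block
multiplication reduces this to `X_b(m) A_m = X_c(m)` and `-C + 2C = C`. Invertibility of `X_b(m)`
follows inductively from the explicit inverse `[[0, B⁻¹], [B⁻¹, -B⁻¹]]` of `[[B, B], [B, 0]]`.
-/

namespace Matrix

variable {ι κ R : Type*} [Fintype ι] [Fintype κ] [CommRing R]

theorem reindex_mul_reindex (e : ι ≃ κ) (M N : Matrix ι ι R) :
    reindex e e M * reindex e e N = reindex e e (M * N) :=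
  submatrix_mul_equiv M N _ _ _

theorem fromBlocks_self_self_self_zero_mul (A C : Matrix ι ι R) :
    fromBlocks A A A 0 * fromBlocks C (-C) 0 ((2 : R) • C) =
      fromBlocks (A * C) (A * C) (A * C) (-(A * C)) := by
  have htwo : -(A * C) + (2 : R) • (A * C) = A * C := by module
  simp [fromBlocks_multiply, Matrix.mul_smul, htwo]

variable [DecidableEq ι]

theorem fromBlocks_self_self_self_zero_mul_inv {A : Matrix ι ι R} (hA : IsUnit A.det) :
    fromBlocks A A A 0 * fromBlocks 0 A⁻¹ A⁻¹ (-A⁻¹) = 1 := by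
  simp [fromBlocks_multiply, mul_nonsing_inv A hA, fromBlocks_one]

theorem isUnit_det_fromBlocks_self_self_self_zero {A : Matrix ι ι R} (hA : IsUnit A.det) :
    IsUnit (fromBlocks A A A 0).det :=
  isUnit_det_of_right_inverse (fromBlocks_self_self_self_zero_mul_inv hA)

end Matrix

theorem isUnit_det_Xb : ∀ m : ℕ, IsUnit (Xb m).det
  | 0 => by simp [Xb]
  | m + 1 => by
    rw [Xb, det_reindex_self]
    exact isUnit_det_fromBlocks_self_self_self_zero (isUnit_det_Xb m)

theorem Xb_mul_assoc (m : ℕ) : Xb m * assoc m = Xc m :=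
  mul_nonsing_inv_cancel_left _ _ (isUnit_det_Xb m)

theorem stmt3 :
    assoc 0 = 1 ∧
      ∀ m : ℕ,
        assoc (m + 1) =
          Matrix.reindex (blockEquiv m) (blockEquiv m)
            (Matrix.fromBlocks (assoc m) (-(assoc m)) 0 ((2 : ℚ) • assoc m)) := by
  refine ⟨by simp [assoc, Xb, Xc], fun m => ?_⟩
  have hsolves : Xb (m + 1) * Matrix.reindex (blockEquiv m) (blockEquiv m)
      (Matrix.fromBlocks (assoc m) (-(assoc m)) 0 ((2 : ℚ) • assoc m)) = Xc (m + 1) := by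
    rw [Xb, Xc, reindex_mul_reindex, fromBlocks_self_self_self_zero_mul, Xb_mul_assoc]
  rw [assoc, ← hsolves, nonsing_inv_mul_cancel_left _ _ (isUnit_det_Xb (m + 1))]
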